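/- arXiv:2404.19703 — 5 statements merged into one kernel-verified Lean document; each statement's English description precedes it below -/
import Mathlib

section
/- There is no Gδ-subset G of ℝ containing ℚ such that the function f(p,q) = (q - p - π)/|q - p - π| on ℚ × ℚ extends to a continuous real-valued function on G × G. -/
open Real Filter Topology

theorem stmt_2 :
    ¬ ∃ (G : Set ℝ) (F : ℝ × ℝ → ℝ), IsGδ G ∧ (∀ q : ℚ, (q : ℝ) ∈ G) ∧
      ContinuousOn F (G ×ˢ G) ∧
      ∀ p q : ℚ, F ((p : ℝ), (q : ℝ)) = ((q : ℝ) - (p : ℝ) - π) / |(q : ℝ) - (p : ℝ) - π| := by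
  rintro ⟨G, F, hGδ, hQ, hF, hf⟩
  -- G is dense
  have hGd : Dense G := Rat.denseRange_cast.mono (Set.range_subset_iff.2 hQ)
  -- the shifted set
  set G' : Set ℝ := (fun x : ℝ => x + π) ⁻¹' G with hG'def
  have hG'δ : IsGδ G' := by
    obtain ⟨f, hfo, rfl⟩ := hGδ.eq_iInter_nat
    rw [hG'def, Set.preimage_iInter]
    exact .iInter_of_isOpen fun n => (hfo n).preimage (continuous_add_right π)
  have hG'd : Dense G' := hGd.preimage (Homeomorph.addRight π).isOpenMap
  obtain ⟨x, hxG, hxG'⟩ := (hGd.inter_of_Gδ hGδ hG'δ hG'd).nonempty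
  have hxpi : x + π ∈ G := hxG'
  have hcw : ContinuousWithinAt F (G ×ˢ G) (x, x + π) := hF _ ⟨hxG, hxpi⟩
  have hone : Tendsto (fun n : ℕ => (1 : ℝ) / (n + 1)) atTop (𝓝 0) :=
    tendsto_one_div_add_atTop_nhds_zero_nat
  have hpos : ∀ n : ℕ, (0 : ℝ) < 1 / (n + 1) := fun n => by positivity
  -- a general limit argument
  have key : ∀ (p q : ℕ → ℚ), Tendsto (fun n => ((p n : ℝ))) atTop (𝓝 x) →
      Tendsto (fun n => ((q n : ℝ))) atTop (𝓝 (x + π)) → ∀ c : ℝ,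
      (∀ n, F ((p n : ℝ), (q n : ℝ)) = c) → F (x, x + π) = c := by
    intro p q hp hq c hc
    have htu : Tendsto (fun n => (((p n : ℝ)), ((q n : ℝ)))) atTop (𝓝[G ×ˢ G] (x, x + π)) := by
      apply tendsto_nhdsWithin_of_tendsto_nhds_of_eventually_within
      · exact hp.prodMk_nhds hq
      · exact Eventually.of_forall fun n => ⟨hQ (p n), hQ (q n)⟩
    have h1 : Tendsto (fun n => F ((p n : ℝ), (q n : ℝ))) atTop (𝓝 (F (x, x + π))) :=
      hcw.tendsto.comp htu
    have h2 : Tendsto (fun n => F ((p n : ℝ), (q n : ℝ))) atTop (𝓝 c) := by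
      simp only [hc]; exact tendsto_const_nhds
    exact tendsto_nhds_unique h1 h2
  -- first sequence : value 1
  choose p hp1 hp2 using fun n : ℕ => exists_rat_btwn (show x - 1 / (n + 1) < x by
    have := hpos n; linarith)
  choose q hq1 hq2 using fun n : ℕ => exists_rat_btwn (show x + π < x + π + 1 / (n + 1) by
    have := hpos n; linarith)
  have hptend : Tendsto (fun n => ((p n : ℝ))) atTop (𝓝 x) := by
    refine tendsto_of_tendsto_of_tendsto_of_le_of_le
      (g := fun n : ℕ => x - 1 / (n + 1)) (h := fun _ : ℕ => x) ?_ tendsto_const_nhds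
      (fun n => (hp1 n).le) (fun n => (hp2 n).le)
    simpa using tendsto_const_nhds.sub hone
  have hqtend : Tendsto (fun n => ((q n : ℝ))) atTop (𝓝 (x + π)) := by
    refine tendsto_of_tendsto_of_tendsto_of_le_of_le
      (g := fun _ : ℕ => x + π) (h := fun n : ℕ => x + π + 1 / (n + 1)) tendsto_const_nhds ?_
      (fun n => (hq1 n).le) (fun n => (hq2 n).le)
    simpa using tendsto_const_nhds.add hone
  have hFone : F (x, x + π) = 1 := by
    refine key p q hptend hqtend 1 fun n => ?_
    rw [hf]
    have hd : (0 : ℝ) < (q n : ℝ) - (p n : ℝ) - π := by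
      have := hp2 n; have := hq1 n; linarith
    rw [abs_of_pos hd, div_self hd.ne']
  -- second sequence : value -1
  choose p' hp'1 hp'2 using fun n : ℕ => exists_rat_btwn (show x < x + 1 / (n + 1) by
    have := hpos n; linarith)
  choose q' hq'1 hq'2 using fun n : ℕ => exists_rat_btwn (show x + π - 1 / (n + 1) < x + π by
    have := hpos n; linarith)
  have hp'tend : Tendsto (fun n => ((p' n : ℝ))) atTop (𝓝 x) := by
    refine tendsto_of_tendsto_of_tendsto_of_le_of_le
      (g := fun _ : ℕ => x) (h := fun n : ℕ => x + 1 / (n + 1)) tendsto_const_nhds ?_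
      (fun n => (hp'1 n).le) (fun n => (hp'2 n).le)
    simpa using tendsto_const_nhds.add hone
  have hq'tend : Tendsto (fun n => ((q' n : ℝ))) atTop (𝓝 (x + π)) := by
    refine tendsto_of_tendsto_of_tendsto_of_le_of_le
      (g := fun n : ℕ => x + π - 1 / (n + 1)) (h := fun _ : ℕ => x + π) ?_ tendsto_const_nhds
      (fun n => (hq'1 n).le) (fun n => (hq'2 n).le)
    simpa using tendsto_const_nhds.sub hone
  have hFneg : F (x, x + π) = -1 := by
    refine key p' q' hp'tend hq'tend (-1) fun n => ?_
    rw [hf]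
    have hd : (q' n : ℝ) - (p' n : ℝ) - π < 0 := by
      have := hp'1 n; have := hq'2 n; linarith
    rw [abs_of_neg hd, div_neg, div_self hd.ne]
  rw [hFone] at hFneg
  norm_num at hFneg
end

section
/- Let τ be a topology on ℝ such that D = {(x,y) : x + y ≥ 0} is open in the product topology τ × τ. Then τ is not second-countable. -/
theorem stmt_4 (τ : TopologicalSpace ℝ)
    (hD : @IsOpen (ℝ × ℝ) (@instTopologicalSpaceProd ℝ ℝ τ τ) {p : ℝ × ℝ | p.1 + p.2 ≥ 0}) :
    ¬ @SecondCountableTopology ℝ τ := by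
  letI := τ
  intro h
  -- every half-line [a, ∞) is τ-open
  have hIci : ∀ a : ℝ, IsOpen (Set.Ici a) := by
    intro a
    rw [isOpen_iff_forall_mem_open]
    intro x hx
    have hxD : ((x, -a) : ℝ × ℝ) ∈ {p : ℝ × ℝ | p.1 + p.2 ≥ 0} := by
      simp only [Set.mem_setOf_eq]
      have : a ≤ x := hx
      linarith
    obtain ⟨U, V, hU, hV, hxU, haV, hUV⟩ := isOpen_prod_iff.mp hD x (-a) hxD
    refine ⟨U, ?_, hU, hxU⟩
    intro y hy
    have : ((y, -a) : ℝ × ℝ) ∈ {p : ℝ × ℝ | p.1 + p.2 ≥ 0} :=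
      hUV (Set.mk_mem_prod hy haV)
    simp only [Set.mem_setOf_eq] at this
    have : a ≤ y := by linarith
    exact this
  -- take a countable basis and pick, for each a, a basic set inside Ici a
  have hbasis := TopologicalSpace.isBasis_countableBasis ℝ
  have hsel : ∀ a : ℝ, ∃ v ∈ TopologicalSpace.countableBasis ℝ, a ∈ v ∧ v ⊆ Set.Ici a :=
    fun a => hbasis.exists_subset_of_mem_open (Set.self_mem_Ici) (hIci a)
  choose f hfB hfmem hfsub using hsel
  have hinj : Function.Injective f := by
    intro a b hab
    have hba : b ∈ f a := hab ▸ hfmem b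
    have h1 : a ≤ b := hfsub a hba
    have hab' : a ∈ f b := hab ▸ hfmem a
    have h2 : b ≤ a := hfsub b hab'
    linarith
  have hcount : (TopologicalSpace.countableBasis ℝ).Countable :=
    TopologicalSpace.countable_countableBasis ℝ
  haveI : Countable (TopologicalSpace.countableBasis ℝ) := hcount.to_subtype
  have : Countable ℝ :=
    Function.Injective.countable (f := fun a => (⟨f a, hfB a⟩ :
      TopologicalSpace.countableBasis ℝ)) (fun a b hab => hinj (by simpa using hab))
  exact (not_countable : ¬Countable ℝ) this
end

section
/- Let H be a ℚ-vector-space basis of ℝ containing π, and for x ∈ ℝ let x_π denote the π-coordinate of x with respect to H. Let A = {x ∈ ℝ : ⌊x_π⌋ is even}. Then A + π = ℝ \ A, i.e., {x + π : x ∈ A} equals the complement of A. -/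
open Real

theorem Module.Basis.repr_add_self_apply {ι R M : Type*} [Semiring R] [AddCommMonoid M]
    [Module R M] (B : Module.Basis ι R M) (x : M) (i : ι) :
    B.repr (x + B i) i = B.repr x i + 1 := by
  simp

theorem Int.even_floor_add_one_iff {K : Type*} [Ring K] [LinearOrder K] [IsOrderedRing K]
    [FloorRing K] (a : K) :
    Even ⌊a + 1⌋ ↔ ¬Even ⌊a⌋ := by
  rw [Int.floor_add_one, Int.even_add_one]

theorem image_add_right_setOf_even_floor {G K : Type*} [AddGroup G] [Ring K] [LinearOrder K]
    [IsOrderedRing K] [FloorRing K] (f : G → K) (c : G) (hf : ∀ x, f (x + c) = f x + 1) :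
    (· + c) '' {x | Even ⌊f x⌋} = {x | Even ⌊f x⌋}ᶜ := by
  ext x
  rw [Set.image_add_right, Set.mem_preimage, Set.mem_ofPred_eq, Set.mem_compl_iff,
    Set.mem_ofPred_eq, ← sub_eq_add_neg]
  have hx : f x = f (x - c) + 1 := by rw [← hf, sub_add_cancel]
  rw [hx, Int.even_floor_add_one_iff, not_not]

theorem stmt_8 {ι : Type*} (B : Module.Basis ι ℚ ℝ) (i₀ : ι) (hB : B i₀ = π) :
    (fun x => x + π) '' {x : ℝ | Even ⌊B.repr x i₀⌋} = {x : ℝ | Even ⌊B.repr x i₀⌋}ᶜ := by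
  rw [← hB]
  exact image_add_right_setOf_even_floor _ _ (B.repr_add_self_apply · i₀)
end

section
/- Let A ⊆ ℝ be dense with A + π = ℝ \ A, and suppose ℝ \ A is a Baire space (in the subspace topology). Then for every Gδ-subset G of ℝ containing A, there exists x ∈ G \ A with x + π ∈ G; in particular (G × G) ∩ L ≠ ∅ where L = {(x, x+π)}. -/
open Real

lemma dense_preimage_val_aux {S U : Set ℝ} (hS : Dense S) (hU : Dense U) (hUo : IsOpen U) :
    Dense ((Subtype.val : S → ℝ) ⁻¹' U) := by
  rw [dense_iff_inter_open]
  rintro V hV ⟨⟨x, hxS⟩, hxV⟩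
  obtain ⟨W, hWo, rfl⟩ := isOpen_induced_iff.mp hV
  have hWU : (W ∩ U).Nonempty := hU.inter_open_nonempty W hWo ⟨x, hxV⟩
  obtain ⟨z, hz⟩ := hS.inter_open_nonempty (W ∩ U) (hWo.inter hUo) hWU
  exact ⟨⟨z, hz.2⟩, hz.1.1, hz.1.2⟩

theorem stmt_10 (A : Set ℝ) (hd : Dense A) (hA : (fun x => x + π) '' A = Aᶜ)
    (hBaire : BaireSpace ↥(Aᶜ)) :
    ∀ G : Set ℝ, IsGδ G → A ⊆ G →
      (∃ x ∈ G \ A, x + π ∈ G) ∧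
      ((G ×ˢ G) ∩ {p : ℝ × ℝ | p.2 = p.1 + π}).Nonempty := by
  intro G hG hAG
  -- Aᶜ is dense
  have hAc : Dense (Aᶜ) := by
    rw [← hA]
    exact ((Homeomorph.addRight π).isDenseEmbedding.dense_image).mpr hd
  obtain ⟨T, hTo, hTc, rfl⟩ := hG
  have hTd : ∀ U ∈ T, Dense U := fun U hU =>
    hd.mono (hAG.trans (Set.sInter_subset_of_mem hU))
  -- family of dense open subsets of the subtype Aᶜ
  set F : Set (Set ↥(Aᶜ)) :=
    ((fun U => (Subtype.val : ↥(Aᶜ) → ℝ) ⁻¹' U) '' T) ∪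
    ((fun U => (fun x : ↥(Aᶜ) => (x : ℝ) + π) ⁻¹' U) '' T) with hF
  have hcont : Continuous (fun x : ↥(Aᶜ) => (x : ℝ) + π) := by continuity
  have hFo : ∀ s ∈ F, IsOpen s := by
    rintro s (⟨U, hU, rfl⟩ | ⟨U, hU, rfl⟩)
    · exact (hTo U hU).preimage continuous_subtype_val
    · exact (hTo U hU).preimage hcont
  have hFd : ∀ s ∈ F, Dense s := by
    rintro s (⟨U, hU, rfl⟩ | ⟨U, hU, rfl⟩)
    · exact dense_preimage_val_aux hAc (hTd U hU) (hTo U hU)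
    · show Dense ((Subtype.val : ↥(Aᶜ) → ℝ) ⁻¹' ((fun x : ℝ => x + π) ⁻¹' U))
      refine dense_preimage_val_aux hAc ?_ ((hTo U hU).preimage (by continuity))
      have := ((Homeomorph.addRight π).isDenseEmbedding.dense_image (s := (fun x : ℝ => x + π) ⁻¹' U)).mp
      apply this
      have himg : (⇑(Homeomorph.addRight π)) '' ((fun x : ℝ => x + π) ⁻¹' U) = U := by
        ext y
        constructor
        · rintro ⟨z, hz, rfl⟩
          simpa using hz
        · intro hy
          exact ⟨y - π, by simpa using hy, by simp⟩
      rw [himg]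
      exact hTd U hU
  have hFc : F.Countable := (hTc.image _).union (hTc.image _)
  have hdense : Dense (⋂₀ F) := dense_sInter_of_isOpen hFo hFc hFd
  have : Nonempty ↥(Aᶜ) := hAc.nonempty.to_subtype
  obtain ⟨⟨y, hyA⟩, hy⟩ := hdense.nonempty
  have hyG : y ∈ ⋂₀ T := by
    intro U hU
    exact hy _ (Or.inl ⟨U, hU, rfl⟩)
  have hyG' : y + π ∈ ⋂₀ T := by
    intro U hU
    exact hy _ (Or.inr ⟨U, hU, rfl⟩)
  refine ⟨⟨y, ⟨hyG, hyA⟩, hyG'⟩, ⟨(y, y + π), ⟨hyG, hyG'⟩, rfl⟩⟩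
end

section
/- Every continuous real-valued function on a countable product of separable topological spaces factors through a countable subproduct; in particular, for an index set κ and separable spaces X_α, any continuous f : ∏_{α<κ} X_α → ℝ equals g ∘ π_E for some countable E ⊆ κ and continuous g : ∏_{α∈E} X_α → ℝ. -/
open TopologicalSpace Set Cardinal

universe u v
section
variable {κ : Type u} {X : κ → Type v} [∀ a, TopologicalSpace (X a)]

theorem hmp [∀ a, SeparableSpace (X a)] [∀ a, Nonempty (X a)]
    (e : κ → ℝ) (he : Function.Injective e) : SeparableSpace (∀ a, X a) := by
  have hd : ∀ a, ∃ d : ℕ → X a, DenseRange d := by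
    intro a
    obtain ⟨s, hsc, hsd⟩ := exists_countable_dense (X a)
    obtain ⟨d, hds⟩ := hsc.exists_eq_range hsd.nonempty
    exact ⟨d, by rw [DenseRange, ← hds]; exact hsd⟩
  choose d hd using hd
  classical
  set pt : List (ℚ × ℚ × ℕ) → ∀ a, X a := fun L a =>
    d a (((L.find? fun t => decide ((t.1 : ℝ) < e a) && decide (e a < (t.2.1 : ℝ))).map
      (·.2.2)).getD 0) with hpt
  refine ⟨⟨Set.range pt, countable_range pt, dense_iff_inter_open.2 fun U hU ⟨x, hx⟩ => ?_⟩⟩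
  obtain ⟨I, u, h1, h2⟩ := isOpen_pi_iff.1 hU x hx
  have key : ∀ J : Finset κ, J ⊆ I → ∃ L : List (ℚ × ℚ × ℕ), ∀ a ∈ J, pt L a ∈ u a := by
    intro J hJ
    induction J using Finset.induction with
    | empty => exact ⟨[], by simp⟩
    | @insert a J ha ih =>
      obtain ⟨L, hL⟩ := ih (fun b hb => hJ (Finset.mem_insert_of_mem hb))
      have haI : a ∈ I := hJ (Finset.mem_insert_self a J)
      obtain ⟨n, hyu⟩ := (hd a).exists_mem_open (h1 a haI).1 ⟨x a, (h1 a haI).2⟩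
      have hδ : ∃ δ : ℝ, 0 < δ ∧ ∀ b ∈ J, δ ≤ |e b - e a| := by
        rcases J.eq_empty_or_nonempty with rfl | hJne
        · exact ⟨1, one_pos, by simp⟩
        · refine ⟨(J.image fun b => |e b - e a|).min' (hJne.image _), ?_, ?_⟩
          · rcases Finset.mem_image.1 ((J.image fun b => |e b - e a|).min'_mem (hJne.image _))
              with ⟨b, hb, hbe⟩
            rw [← hbe]
            have hne : e b - e a ≠ 0 := sub_ne_zero.2 fun h => ha (he h ▸ hb)
            exact abs_pos.2 hne
          · intro b hb
            exact Finset.min'_le _ _ (Finset.mem_image_of_mem _ hb)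
      obtain ⟨δ, hδ0, hδsep⟩ := hδ
      obtain ⟨p, hp1, hp2⟩ := exists_rat_btwn (show e a - δ < e a by linarith)
      obtain ⟨q, hq1, hq2⟩ := exists_rat_btwn (show e a < e a + δ by linarith)
      refine ⟨(p, q, n) :: L, ?_⟩
      intro b hb
      rcases Finset.mem_insert.1 hb with rfl | hb
      · have : pt ((p, q, n) :: L) b = d b n := by
          simp only [hpt]
          rw [List.find?_cons_of_pos]
          · simp
          · simp only [Bool.and_eq_true, decide_eq_true_eq]
            exact ⟨hp2, hq1⟩
        rw [this]; exact hyu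
      · have hbne : ¬ ((p : ℝ) < e b ∧ e b < (q : ℝ)) := by
          rintro ⟨h1', h2'⟩
          have hsep := hδsep b hb
          have : |e b - e a| < δ := by
            rw [abs_sub_lt_iff]; constructor <;> linarith
          linarith
        have : pt ((p, q, n) :: L) b = pt L b := by
          simp only [hpt]
          rw [List.find?_cons_of_neg]
          simp only [Bool.and_eq_true, decide_eq_true_eq]
          tauto
        rw [this]; exact hL b hb
  obtain ⟨L, hL⟩ := key I le_rfl
  exact ⟨pt L, h2 fun a ha => hL a ha, Set.mem_range_self L⟩

open Classical in
noncomputable def extFun [∀ a, Nonempty (X a)] (E : Set κ) (z : ∀ a : E, X a) : ∀ a, X a :=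
  fun a => if h : a ∈ E then z ⟨a, h⟩ else Classical.arbitrary (X a)

theorem continuous_extFun [∀ a, Nonempty (X a)] (E : Set κ) :
    Continuous (extFun (X := X) E) := by
  refine continuous_pi fun a => ?_
  by_cases h : a ∈ E
  · simp only [extFun, dif_pos h]
    exact continuous_apply _
  · simp only [extFun, dif_neg h]
    exact continuous_const

theorem extFun_apply_mem [∀ a, Nonempty (X a)] {E : Set κ} {a : κ} (h : a ∈ E)
    (z : ∀ a : E, X a) : extFun E z a = z ⟨a, h⟩ := by
  simp only [extFun, dif_pos h]

/-- ccc for disjoint families of basic open boxes -/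
theorem ccc_basic [∀ a, SeparableSpace (X a)] [∀ a, Nonempty (X a)]
    {𝒮 : Set (Set (∀ a, X a))}
    (hP : ∀ B ∈ 𝒮, B.Nonempty ∧ ∃ (F : Finset κ) (u : ∀ a, Set (X a)),
      (∀ a ∈ F, IsOpen (u a)) ∧ B = (F : Set κ).pi u)
    (hdisj : 𝒮.Pairwise (Disjoint · ·)) : 𝒮.Countable := by
  classical
  by_contra hc
  rw [countable_iff_lt_aleph_one, not_lt] at hc
  obtain ⟨t, hts, htcard⟩ := Cardinal.le_mk_iff_exists_subset.1 hc
  have hPt : ∀ B : t, (B : Set (∀ a, X a)).Nonempty ∧ ∃ (F : Finset κ) (u : ∀ a, Set (X a)),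
      (∀ a ∈ F, IsOpen (u a)) ∧ (B : Set (∀ a, X a)) = (F : Set κ).pi u :=
    fun B => hP B (hts B.2)
  choose hne F u hu hBeq using hPt
  set E : Set κ := ⋃ B : t, ((F B : Finset κ) : Set κ) with hE
  -- E has cardinality at most continuum, so it embeds into ℝ
  have hEcard : #E ≤ Cardinal.continuum.{u} := by
    have h := Cardinal.mk_iUnion_le_lift (fun B : t => ((F B : Finset κ) : Set κ))
    have h2 : (⨆ B : t, Cardinal.lift.{max u v} #((F B : Finset κ) : Set κ)) ≤ ℵ₀ :=
      ciSup_le' fun B =>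
        (Cardinal.lift_le.2 (le_of_lt (Cardinal.lt_aleph0_of_finite _))).trans_eq
          Cardinal.lift_aleph0
    have h3 : Cardinal.lift.{u} #t ≤ Cardinal.continuum := by
      rw [htcard]
      simp only [Cardinal.lift_aleph, Ordinal.lift_one]
      exact Cardinal.aleph_one_le_continuum
    have h4 : Cardinal.lift.{max u v} #E ≤ Cardinal.continuum := by
      refine h.trans ?_
      calc Cardinal.lift.{u} #t * ⨆ B : t, Cardinal.lift.{max u v} #((F B : Finset κ) : Set κ)
          ≤ Cardinal.continuum * Cardinal.continuum :=
            mul_le_mul' h3 (h2.trans Cardinal.aleph0_le_continuum)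
        _ = Cardinal.continuum := Cardinal.mul_eq_self Cardinal.aleph0_le_continuum
    rw [← Cardinal.lift_continuum.{max u v, u}] at h4
    exact Cardinal.lift_le.1 h4
  have hEmb : Nonempty (E ↪ ℝ) := by
    rw [← Cardinal.lift_mk_le', Cardinal.mk_real, Cardinal.lift_continuum, Cardinal.lift_uzero]
    exact hEcard
  obtain ⟨e⟩ := hEmb
  haveI : SeparableSpace (∀ a : E, X a) := hmp e e.injective
  obtain ⟨D, hDc, hDd⟩ := exists_countable_dense (∀ a : E, X a)
  have hkey : ∀ B : t, ∃ z ∈ D, z ∈ extFun E ⁻¹' (B : Set (∀ a, X a)) := by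
    intro B
    refine hDd.exists_mem_open (IsOpen.preimage (continuous_extFun E) ?_) ?_
    · rw [hBeq B]
      exact isOpen_set_pi (Finset.finite_toSet _) (hu B)
    · obtain ⟨x, hx⟩ := hne B
      refine ⟨fun a : E => x a, ?_⟩
      have hFE : ((F B : Finset κ) : Set κ) ⊆ E :=
        subset_iUnion (fun B : t => ((F B : Finset κ) : Set κ)) B
      rw [mem_preimage, hBeq B]
      rw [hBeq B] at hx
      intro a ha
      rw [extFun_apply_mem (hFE ha)]
      exact hx a ha
  choose z hzD hzB using hkey
  have hinj : Function.Injective z := by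
    intro B C hBC
    by_contra hne'
    have hvalne : (B : Set (∀ a, X a)) ≠ (C : Set (∀ a, X a)) := fun h => hne' (Subtype.ext h)
    have hd := hdisj (hts B.2) (hts C.2) hvalne
    exact Set.disjoint_left.1 (hd.preimage (extFun E)) (hzB B) (hBC ▸ hzB C)
  have hfin : #t ≤ ℵ₀ := by
    have h5 : #t ≤ #D := Cardinal.mk_le_of_injective
      (f := fun B : t => (⟨z B, hzD B⟩ : D)) (fun B C h => hinj (congrArg Subtype.val h))
    exact h5.trans (Cardinal.mk_le_aleph0_iff.2 hDc.to_subtype)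
  rw [htcard] at hfin
  exact absurd hfin (not_le.2 Cardinal.aleph0_lt_aleph_one)

end

section
variable {κ : Type u} {X : κ → Type v} [∀ a, TopologicalSpace (X a)]
  [∀ a, SeparableSpace (X a)] [∀ a, Nonempty (X a)]

theorem closure_depends {U : Set (∀ a, X a)} (hU : IsOpen U) :
    ∃ E : Set κ, E.Countable ∧
      ∀ x y : ∀ a, X a, (∀ a ∈ E, x a = y a) → x ∈ closure U → y ∈ closure U := by
  classical
  set 𝒜 : Set (Set (Set (∀ a, X a))) :=
    {S | (∀ B ∈ S, B ⊆ U ∧ B.Nonempty ∧ ∃ (F : Finset κ) (u : ∀ a, Set (X a)),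
      (∀ a ∈ F, IsOpen (u a)) ∧ B = (F : Set κ).pi u) ∧ S.Pairwise (Disjoint · ·)} with h𝒜
  obtain ⟨m, hm⟩ := zorn_subset 𝒜 (fun c hc hchain => by
    refine ⟨⋃₀ c, ⟨?_, ?_⟩, fun s hs => subset_sUnion_of_mem hs⟩
    · rintro B ⟨s, hs, hBs⟩
      exact (hc hs).1 B hBs
    · intro B hB C hC hBC
      obtain ⟨s, hs, hBs⟩ := hB
      obtain ⟨s', hs', hCs⟩ := hC
      rcases hchain.total hs hs' with h | h
      · exact (hc hs').2 (h hBs) hCs hBC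
      · exact (hc hs).2 hBs (h hCs) hBC)
  have hmem := hm.1
  rw [h𝒜, Set.mem_setOf_eq] at hmem
  have hcount : m.Countable :=
    ccc_basic (fun B hB => ⟨(hmem.1 B hB).2.1, (hmem.1 B hB).2.2⟩) hmem.2
  have hPm : ∀ B : m, ∃ (F : Finset κ) (u : ∀ a, Set (X a)),
      (∀ a ∈ F, IsOpen (u a)) ∧ (B : Set (∀ a, X a)) = (F : Set κ).pi u :=
    fun B => (hmem.1 B B.2).2.2
  choose F u hu hBeq using hPm
  haveI : Countable m := hcount.to_subtype
  refine ⟨⋃ B : m, ((F B : Finset κ) : Set κ), Set.countable_iUnion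
    (fun B => (F B).countable_toSet), ?_⟩
  set E : Set κ := ⋃ B : m, ((F B : Finset κ) : Set κ) with hE
  set V : Set (∀ a, X a) := ⋃₀ m with hV
  have hVdep : ∀ x y : ∀ a, X a, (∀ a ∈ E, x a = y a) → x ∈ V → y ∈ V := by
    rintro x y hxy ⟨B, hB, hxB⟩
    refine ⟨B, hB, ?_⟩
    have hBe : B = ((F ⟨B, hB⟩ : Finset κ) : Set κ).pi (u ⟨B, hB⟩) := hBeq ⟨B, hB⟩
    rw [hBe] at hxB ⊢
    intro a ha
    have haE : a ∈ E := Set.mem_iUnion.2 ⟨⟨B, hB⟩, ha⟩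
    rw [← hxy a haE]
    exact hxB a ha
  have hVU : V ⊆ U := fun p ⟨B, hB, hpB⟩ => (hmem.1 B hB).1 hpB
  have hUV : U ⊆ closure V := by
    by_contra hcon
    obtain ⟨x, hxU, hxV⟩ := Set.not_subset.1 hcon
    have hW : IsOpen (U ∩ (closure V)ᶜ) := hU.inter (isClosed_closure.isOpen_compl)
    obtain ⟨I, w, hw1, hw2⟩ := isOpen_pi_iff.1 hW x ⟨hxU, hxV⟩
    set B : Set (∀ a, X a) := (I : Set κ).pi w with hB
    have hBW : B ⊆ U ∩ (closure V)ᶜ := hw2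
    have hxB : x ∈ B := fun a ha => (hw1 a ha).2
    have hBm : B ∉ m := by
      intro hBm
      exact (hBW hxB).2 (subset_closure (⟨B, hBm, hxB⟩ : x ∈ V))
    have hnew : insert B m ∈ 𝒜 := by
      constructor
      · rintro C hC
        rcases Set.mem_insert_iff.1 hC with rfl | hC
        · exact ⟨fun p hp => (hBW hp).1, ⟨x, hxB⟩,
            I, w, fun a ha => (hw1 a ha).1, rfl⟩
        · exact hmem.1 C hC
      · intro C hC D hD hCD
        rcases Set.mem_insert_iff.1 hC with rfl | hC <;>
          rcases Set.mem_insert_iff.1 hD with rfl | hD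
        · exact absurd rfl hCD
        · exact Set.disjoint_left.2 fun p hpC hpD =>
            (hBW hpC).2 (subset_closure ⟨D, hD, hpD⟩)
        · exact Set.disjoint_right.2 fun p hpD hpC =>
            (hBW hpD).2 (subset_closure ⟨C, hC, hpC⟩)
        · exact hmem.2 hC hD hCD
    exact hBm (hm.2 hnew (Set.subset_insert B m) (Set.mem_insert B m))
  intro x y hxy hx
  have hxV : x ∈ closure V := closure_minimal hUV isClosed_closure hx
  have hyV : y ∈ closure V := by
    rw [mem_closure_iff] at hxV ⊢
    intro O hO hyO
    obtain ⟨I, w, hw1, hw2⟩ := isOpen_pi_iff.1 hO y hyO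
    have hO' : IsOpen (((I : Set κ) ∩ E).pi w) :=
      isOpen_set_pi (I.finite_toSet.inter_of_left E)
        (fun a ha => (hw1 a ha.1).1)
    have hxO' : x ∈ ((I : Set κ) ∩ E).pi w := by
      intro a ha
      rw [hxy a ha.2]
      exact (hw1 a ha.1).2
    obtain ⟨p, hpO', hpV⟩ := hxV _ hO' hxO'
    classical
    set q : ∀ a, X a := fun a => if h : a ∈ E then p a else y a with hq
    have hqV : q ∈ V := hVdep p q (fun a ha => by simp only [hq, dif_pos ha]) hpV
    refine ⟨q, hw2 ?_, hqV⟩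
    intro a ha
    by_cases h : a ∈ E
    · simp only [hq, dif_pos h]
      exact hpO' a ⟨ha, h⟩
    · simp only [hq, dif_neg h]
      exact (hw1 a ha).2
  exact closure_mono hVU hyV

end

theorem stmt_13 {κ : Type*} (X : κ → Type*) [∀ a, TopologicalSpace (X a)]
    [∀ a, SeparableSpace (X a)] [∀ a, Nonempty (X a)]
    (f : (∀ a, X a) → ℝ) (hf : Continuous f) :
    ∃ E : Set κ, E.Countable ∧ ∃ g : (∀ a : E, X a) → ℝ, Continuous g ∧
      ∀ x : ∀ a, X a, f x = g (fun a => x a) := by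
  have hcl : ∀ p : ℚ, ∃ E : Set κ, E.Countable ∧
      ∀ x y : ∀ a, X a, (∀ a ∈ E, x a = y a) →
        x ∈ closure (f ⁻¹' (Set.Iio (p : ℝ))) → y ∈ closure (f ⁻¹' (Set.Iio (p : ℝ))) :=
    fun p => closure_depends (hf.isOpen_preimage _ isOpen_Iio)
  choose Ep hEpc hEp using hcl
  set E : Set κ := ⋃ p : ℚ, Ep p with hE
  have hEc : E.Countable := Set.countable_iUnion hEpc
  have key : ∀ x y : ∀ a, X a, (∀ a ∈ E, x a = y a) → f y ≤ f x := by
    intro x y hxy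
    by_contra hcon
    push_neg at hcon
    obtain ⟨p, hp1, hp2⟩ := exists_rat_btwn hcon
    have hx : x ∈ closure (f ⁻¹' (Set.Iio (p : ℝ))) := subset_closure hp1
    have hy := hEp p x y (fun a ha => hxy a (Set.mem_iUnion.2 ⟨p, ha⟩)) hx
    have : f y ∈ closure (Set.Iio (p : ℝ)) := hf.closure_preimage_subset _ hy
    rw [closure_Iio] at this
    exact absurd hp2 (not_lt.2 this)
  have key2 : ∀ x y : ∀ a, X a, (∀ a ∈ E, x a = y a) → f x = f y :=
    fun x y hxy => le_antisymm (key y x fun a ha => (hxy a ha).symm) (key x y hxy)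
  refine ⟨E, hEc, fun z => f (extFun E z), hf.comp (continuous_extFun E), fun x => ?_⟩
  exact key2 x (extFun E fun a : E => x a)
    (fun a ha => (extFun_apply_mem ha (fun a : E => x a)).symm)
end
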